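/- In the construction for the (⇒) direction of Lemma 3.1, if in addition 𝔉, ū ⊭ᵛ σ(φ), then: u₁ ∈ W′₁ (so W′₁ is nonempty and ū ∈ W̄′), the frame 𝔉′₁ is reflexive, and 𝔉′, ū ⊭^{v′} φ; consequently φ is refuted in a product of a reflexive 1-frame with 𝔉₂, …, 𝔉ₙ. -/

import Mathlib

namespace ModalProducts

/-- `N`-modal formulas over propositional variables indexed by `ℕ`
(the variable `pₖ` is `var k`; the extra variable `p` is `var 0`). -/
inductive MF (N : ℕ) : Type
  | var : ℕ → MF N
  | bot : MF N
  | and : MF N → MF N → MF N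
  | or  : MF N → MF N → MF N
  | imp : MF N → MF N → MF N
  | box : Fin N → MF N → MF N
deriving DecidableEq

namespace MF

variable {N : ℕ}

/-- negation: `¬ψ = ψ → ⊥`. -/
def neg (φ : MF N) : MF N := imp φ bot

/-- diamond: `◇ᵢψ = ¬□ᵢ¬ψ`. -/
def dia (i : Fin N) (φ : MF N) : MF N := neg (box i (neg φ))

/-- modal depth. -/
def md : MF N → ℕ
  | var _ => 0
  | bot => 0
  | and φ ψ => max (md φ) (md ψ)
  | or φ ψ => max (md φ) (md ψ)
  | imp φ ψ => max (md φ) (md ψ)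
  | box _ φ => md φ + 1

/-- length (number of symbols; the variable `pₖ` counts as `k+1` symbols,
accounting for the subscript). -/
def len : MF N → ℕ
  | var q => q + 1
  | bot => 1
  | and φ ψ => len φ + len ψ + 1
  | or φ ψ => len φ + len ψ + 1
  | imp φ ψ => len φ + len ψ + 1
  | box _ φ => len φ + 1

/-- the set of propositional variables occurring in a formula. -/
def vars : MF N → Set ℕ
  | var q => {q}
  | bot => ∅
  | and φ ψ => vars φ ∪ vars ψ
  | or φ ψ => vars φ ∪ vars ψ
  | imp φ ψ => vars φ ∪ vars ψ
  | box _ φ => vars φ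

/-- the largest index of a variable occurring in a formula (0 if none). -/
def maxVar : MF N → ℕ
  | var q => q
  | bot => 0
  | and φ ψ => max (maxVar φ) (maxVar ψ)
  | or φ ψ => max (maxVar φ) (maxVar ψ)
  | imp φ ψ => max (maxVar φ) (maxVar ψ)
  | box _ φ => maxVar φ

/-- the list of subformulas of a formula. -/
def subfs : MF N → List (MF N)
  | var q => [var q]
  | bot => [bot]
  | and φ ψ => and φ ψ :: (subfs φ ++ subfs ψ)
  | or φ ψ => or φ ψ :: (subfs φ ++ subfs ψ)
  | imp φ ψ => imp φ ψ :: (subfs φ ++ subfs ψ)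
  | box i φ => box i φ :: subfs φ

/-- uniform substitution of formulas for variables. -/
def subst (s : ℕ → MF N) : MF N → MF N
  | var q => s q
  | bot => bot
  | and φ ψ => and (subst s φ) (subst s ψ)
  | or φ ψ => or (subst s φ) (subst s ψ)
  | imp φ ψ => imp (subst s φ) (subst s ψ)
  | box i φ => box i (subst s φ)

end MF

/-- `θ` is a subformula of `φ`. -/
def Subformula {N : ℕ} (θ φ : MF N) : Prop := θ ∈ φ.subfs

/-- A Kripke `N`-frame: a nonempty set of points with `N` accessibility relations. -/
structure Frame (N : ℕ) where
  W : Type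
  nonempty : Nonempty W
  R : Fin N → W → W → Prop

/-- Truth of a formula at a point of a frame under a valuation. -/
def Sat {N : ℕ} (F : Frame N) (v : ℕ → Set F.W) : F.W → MF N → Prop
  | x, .var q => x ∈ v q
  | _, .bot => False
  | x, .and φ ψ => Sat F v x φ ∧ Sat F v x ψ
  | x, .or φ ψ => Sat F v x φ ∨ Sat F v x ψ
  | x, .imp φ ψ => Sat F v x φ → Sat F v x ψ
  | x, .box i φ => ∀ y, F.R i x y → Sat F v y φ

/-- Validity of a formula in a frame: truth at every point under every valuation. -/
def Valid {N : ℕ} (F : Frame N) (φ : MF N) : Prop := ∀ (v : ℕ → Set F.W) (x : F.W), Sat F v x φ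

/-- A set of formulas is valid in a frame if all of its members are. -/
def ValidSet {N : ℕ} (F : Frame N) (L : Set (MF N)) : Prop := ∀ φ ∈ L, Valid F φ

/-- The logic of a class of frames. -/
def Logic {N : ℕ} (C : Set (Frame N)) : Set (MF N) := {φ | ∀ F ∈ C, Valid F φ}

/-- A logic is Kripke complete if it is the logic of some nonempty class of frames. -/
def KripkeComplete {N : ℕ} (L : Set (MF N)) : Prop :=
  ∃ C : Set (Frame N), C.Nonempty ∧ L = Logic C

/-- The product of `N` 1-frames. -/
def prodFrame {N : ℕ} (Fs : Fin N → Frame 1) : Frame N where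
  W := ∀ i, (Fs i).W
  nonempty := ⟨fun i => (Fs i).nonempty.some⟩
  R := fun i x y => (Fs i).R 0 (x i) (y i) ∧ ∀ k, k ≠ i → x k = y k

/-- The product of `N` Kripke complete monomodal logics: the logic of the class of
products of frames of the factors. -/
def productLogic {N : ℕ} (Ls : Fin N → Set (MF 1)) : Set (MF N) :=
  Logic {F | ∃ Fs : Fin N → Frame 1, (∀ i, ValidSet (Fs i) (Ls i)) ∧ F = prodFrame Fs}

/-- A 1-frame is reflexive. -/
def ReflexiveFrame (F : Frame 1) : Prop := ∀ x, F.R 0 x x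

/-- The logic `T` of all reflexive 1-frames. -/
def logicT : Set (MF 1) := Logic {F | ReflexiveFrame F}

/-- The logic `K` of all 1-frames. -/
def logicK : Set (MF 1) := Logic Set.univ

/-- The logic `S5` of all 1-frames whose relation is an equivalence. -/
def logicS5 : Set (MF 1) := Logic {F | Equivalence (F.R 0)}

section Translation

variable {n : ℕ}

/-- the variable `p`. -/
def pv : MF (n+1) := .var 0

/-- `◆₁ψ = ◇₁(¬p ∧ ◇₁(p ∧ ψ))`. -/
def blackDia (ψ : MF (n+1)) : MF (n+1) :=
  MF.dia 0 (.and (MF.neg pv) (MF.dia 0 (.and pv ψ)))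

/-- `α_k = ◆₁ᵏ □₁ p`. -/
def alphaF (k : ℕ) : MF (n+1) := blackDia^[k] (.box 0 pv)

/-- `β_k = ¬p ∧ ◇₁(p ∧ α_k)`. -/
def betaF (k : ℕ) : MF (n+1) := .and (MF.neg pv) (MF.dia 0 (.and pv (alphaF k)))

/-- `B = β_{m+1}`. -/
def Bf (m : ℕ) : MF (n+1) := betaF (m+1)

/-- The translation `σ`: `σ(p_k) = β_k`, `σ(⊥) = ⊥`, `σ` commutes with `∧, ∨, →`,
and `σ(□ᵢψ) = □ᵢ(B → σ(ψ))`. -/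
def sigmaT (m : ℕ) : MF (n+1) → MF (n+1)
  | .var k => betaF k
  | .bot => .bot
  | .and φ ψ => .and (sigmaT m φ) (sigmaT m ψ)
  | .or φ ψ => .or (sigmaT m φ) (sigmaT m ψ)
  | .imp φ ψ => .imp (sigmaT m φ) (sigmaT m ψ)
  | .box i φ => .box i (.imp (Bf m) (sigmaT m φ))

/-- conjunction of a head formula with a list of formulas. -/
def bigAnd (ψ : MF (n+1)) (l : List (MF (n+1))) : MF (n+1) := l.foldl .and ψ

/-- `□^{≤k}`: `□^{≤0}ψ = ψ`, `□^{≤k+1}ψ = □^{≤k}ψ ∧ □₁□^{≤k}ψ ∧ … ∧ □ₙ□^{≤k}ψ`. -/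
def boxLe : ℕ → MF (n+1) → MF (n+1)
  | 0, ψ => ψ
  | k+1, ψ => bigAnd (boxLe k ψ) (List.ofFn fun i : Fin (n+1) => .box i (boxLe k ψ))

/-- `□₋₁^{≤k}`: like `□^{≤k}` but using only `□₂, …, □ₙ`. -/
def boxLeTail : ℕ → MF (n+1) → MF (n+1)
  | 0, ψ => ψ
  | k+1, ψ => bigAnd (boxLeTail k ψ) (List.ofFn fun i : Fin n => .box i.succ (boxLeTail k ψ))

/-- `◇₋₁^{≤k}ψ = ¬□₋₁^{≤k}¬ψ`. -/
def diaLeTail (k : ℕ) (ψ : MF (n+1)) : MF (n+1) := MF.neg (boxLeTail k (MF.neg ψ))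

/-- `A = B ∧ □^{≤md φ}(B → □₋₁^{≤md φ}B) ∧ □^{≤md φ}(◇₋₁^{≤md φ}B → B)`. -/
def Af (m : ℕ) (φ : MF (n+1)) : MF (n+1) :=
  .and (Bf m)
    (.and (boxLe φ.md (.imp (Bf m) (boxLeTail φ.md (Bf m))))
          (boxLe φ.md (.imp (diaLeTail φ.md (Bf m)) (Bf m))))

end Translation

end ModalProducts
namespace ModalProducts

section Restriction

variable {n : ℕ}

/-- `R̄^{≤k}`: `R̄^{≤0}` is the identity, and
`R̄^{≤k+1} = R̄^{≤k} ∪ R̄₁ ∘ R̄^{≤k} ∪ … ∪ R̄ₙ ∘ R̄^{≤k}`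
(reachability in at most `k` steps along the relations of the frame). -/
def RleAll {N : ℕ} (F : Frame N) : ℕ → F.W → F.W → Prop
  | 0 => fun x y => x = y
  | k+1 => fun x y => RleAll F k x y ∨ ∃ (i : Fin N) (z : F.W), F.R i x z ∧ RleAll F k z y

/-- `R̄₋₁^{≤k}`: reachability in at most `k` steps along `R̄₂, …, R̄ₙ` only. -/
def RleTail (F : Frame (n+1)) : ℕ → F.W → F.W → Prop
  | 0 => fun x y => x = y
  | k+1 => fun x y =>
      RleTail F k x y ∨ ∃ (i : Fin n) (z : F.W), F.R i.succ x z ∧ RleTail F k z y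

/-- The set `W′₁ = {x₁ ∈ W₁ : 𝔉, x̄ ⊨ᵛ B and x̄ ∈ R̄^{≤d}(ū)` for some `x̄ ∈ W̄` with first
coordinate `x₁}`. -/
def restrSet (Fs : Fin (n+1) → Frame 1) (m d : ℕ) (v : ℕ → Set (prodFrame Fs).W)
    (u : (prodFrame Fs).W) : Set (Fs 0).W :=
  {x1 | ∃ x : (prodFrame Fs).W, x 0 = x1 ∧ Sat (prodFrame Fs) v x (Bf m) ∧
        RleAll (prodFrame Fs) d u x}

/-- The subframe of a 1-frame induced by a nonempty set of points
(the relation is restricted to the set). -/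
def subFrame1 (F1 : Frame 1) (S : Set F1.W) (hS : S.Nonempty) : Frame 1 where
  W := S
  nonempty := ⟨⟨hS.choose, hS.choose_spec⟩⟩
  R := fun i x y => F1.R i x.val y.val

/-- The factors of the restricted product `𝔉′ = 𝔉′₁ × 𝔉₂ × … × 𝔉ₙ`,
where `𝔉′₁ = ⟨W′₁, R₁ ↾ W′₁⟩`. -/
def restrFactors (Fs : Fin (n+1) → Frame 1) (m d : ℕ) (v : ℕ → Set (prodFrame Fs).W)
    (u : (prodFrame Fs).W) (hS : (restrSet Fs m d v u).Nonempty) : Fin (n+1) → Frame 1 :=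
  Fin.cases (subFrame1 (Fs 0) (restrSet Fs m d v u) hS) (fun i => Fs i.succ)

/-- The restricted product frame `𝔉′ = 𝔉′₁ × 𝔉₂ × … × 𝔉ₙ`. -/
def restrFrame (Fs : Fin (n+1) → Frame 1) (m d : ℕ) (v : ℕ → Set (prodFrame Fs).W)
    (u : (prodFrame Fs).W) (hS : (restrSet Fs m d v u).Nonempty) : Frame (n+1) :=
  prodFrame (restrFactors Fs m d v u hS)

/-- The natural inclusion `W̄′ ⊆ W̄` of the points of `𝔉′` among those of `𝔉`. -/
def restrEmb (Fs : Fin (n+1) → Frame 1) (m d : ℕ) (v : ℕ → Set (prodFrame Fs).W)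
    (u : (prodFrame Fs).W) (hS : (restrSet Fs m d v u).Nonempty)
    (y : (restrFrame Fs m d v u hS).W) : (prodFrame Fs).W :=
  Fin.cases (motive := fun i => (Fs i).W) (y 0).val (fun i => y i.succ)

/-- A point `x̄ ∈ W̄` whose first coordinate lies in `W′₁`, viewed as a point of `W̄′`. -/
def mkRestrPt (Fs : Fin (n+1) → Frame 1) (m d : ℕ) (v : ℕ → Set (prodFrame Fs).W)
    (u : (prodFrame Fs).W) (hS : (restrSet Fs m d v u).Nonempty)
    (x : (prodFrame Fs).W) (hx : x 0 ∈ restrSet Fs m d v u) :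
    (restrFrame Fs m d v u hS).W :=
  Fin.cases (motive := fun i => ((restrFactors Fs m d v u hS) i).W)
    ⟨x 0, hx⟩ (fun i => x i.succ)

end Restriction

end ModalProducts

/-!
Within `md φ` steps of `ū`, the last two conjuncts of `A` make `B` invariant under moves along
`R̄₂, …, R̄ₙ` in both directions, so there `B` depends only on the first coordinate of a point.
Hence the reachable points of `𝔉′` are exactly the reachable `B`-points of `𝔉`, and the
relativised boxes `□ᵢ(B → ·)` of `σ` become the boxes of `𝔉′`: by induction on `ψ`,
`𝔉′, x̄ ⊨^{v′} ψ` iff `𝔉, x̄ ⊨ᵛ σ(ψ)` at every point within `k` steps of `ū` with `md ψ + k ≤ md φ`.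
-/

namespace ModalProducts

section Semantics

variable {n : ℕ} {F : Frame (n+1)} {v : ℕ → Set F.W} {x : F.W}

theorem sat_bigAnd {ψ : MF (n+1)} {l : List (MF (n+1))} :
    Sat F v x (bigAnd ψ l) ↔ Sat F v x ψ ∧ ∀ χ ∈ l, Sat F v x χ := by
  induction l generalizing ψ with
  | nil => simp [bigAnd]
  | cons χ l ih =>
    rw [show bigAnd ψ (χ :: l) = bigAnd (.and ψ χ) l from rfl, ih, List.forall_mem_cons]
    exact and_assoc

theorem sat_bigAnd_ofFn_box {K : ℕ} (f : Fin K → Fin (n+1)) {ψ χ : MF (n+1)} :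
    Sat F v x (bigAnd ψ (List.ofFn fun i => .box (f i) χ)) ↔
      Sat F v x ψ ∧ ∀ i y, F.R (f i) x y → Sat F v y χ := by
  rw [sat_bigAnd, List.forall_mem_ofFn_iff]
  rfl

theorem sat_boxLe {k : ℕ} {ψ : MF (n+1)} :
    Sat F v x (boxLe k ψ) ↔ ∀ y, RleAll F k x y → Sat F v y ψ := by
  induction k generalizing x with
  | zero => exact ⟨fun h y hy => hy ▸ h, fun h => h x rfl⟩
  | succ k ih =>
    refine (sat_bigAnd_ofFn_box id).trans ?_
    simp only [ih, RleAll, or_imp, forall_and, exists_imp, and_imp, id]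
    exact and_congr_right'
      ⟨fun h y i z hz hy => h i z hz y hy, fun h i z hz y hy => h y i z hz hy⟩

theorem sat_boxLeTail {k : ℕ} {ψ : MF (n+1)} :
    Sat F v x (boxLeTail k ψ) ↔ ∀ y, RleTail F k x y → Sat F v y ψ := by
  induction k generalizing x with
  | zero => exact ⟨fun h y hy => hy ▸ h, fun h => h x rfl⟩
  | succ k ih =>
    refine (sat_bigAnd_ofFn_box Fin.succ).trans ?_
    simp only [ih, RleTail, or_imp, forall_and, exists_imp, and_imp]
    exact and_congr_right'
      ⟨fun h y i z hz hy => h i z hz y hy, fun h i z hz y hy => h y i z hz hy⟩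

theorem sat_diaLeTail {k : ℕ} {ψ : MF (n+1)} :
    Sat F v x (diaLeTail k ψ) ↔ ∃ y, RleTail F k x y ∧ Sat F v y ψ := by
  simp only [diaLeTail, MF.neg, Sat, sat_boxLeTail, imp_false, not_forall, not_not, exists_prop]

end Semantics

section Reachability

variable {N : ℕ} {F : Frame N} {k : ℕ} {x y z : F.W}

theorem rleAll_refl (F : Frame N) (k : ℕ) (x : F.W) : RleAll F k x x := by
  induction k with
  | zero => rfl
  | succ k ih => exact Or.inl ih

theorem RleAll.mono {k' : ℕ} (hk : k ≤ k') (h : RleAll F k x y) : RleAll F k' x y := by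
  induction hk with
  | refl => exact h
  | step _ ih => exact Or.inl ih

theorem RleAll.snoc {i : Fin N} (h : RleAll F k x y) (hR : F.R i y z) : RleAll F (k+1) x z := by
  induction k generalizing x with
  | zero => cases h; exact Or.inr ⟨i, z, hR, rfl⟩
  | succ k ih =>
    rcases h with h | ⟨j, w, hxw, hwy⟩
    · exact Or.inl (ih h)
    · exact Or.inr ⟨j, w, hxw, ih hwy⟩

end Reachability

section Product

variable {N : ℕ} {Fs : Fin N → Frame 1} {k : ℕ} {i j : Fin N} {x y : ∀ i, (Fs i).W}

theorem prodFrame_R_update_self {b : (Fs j).W} (hb : (Fs j).R 0 (x j) b) :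
    (prodFrame Fs).R j x (Function.update x j b) :=
  ⟨by rwa [Function.update_self], fun l hl => (Function.update_of_ne hl _ _).symm⟩

theorem update_eq_update_of_prodFrame_R (h : (prodFrame Fs).R j x y) (b : (Fs j).W) :
    Function.update x j b = Function.update y j b := by
  funext l
  by_cases hl : l = j
  · subst hl; simp
  · simp [Function.update_of_ne hl, h.2 l hl]

theorem prodFrame_R_update_of_ne (h : (prodFrame Fs).R i x y) (hij : i ≠ j) (b : (Fs j).W) :
    (prodFrame Fs).R i (Function.update x j b) (Function.update y j b) := by
  refine ⟨by simpa [Function.update_of_ne hij] using h.1, fun l hl => ?_⟩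
  by_cases hlj : l = j
  · subst hlj; simp
  · simp [Function.update_of_ne hlj, h.2 l hl]

theorem RleAll.apply (h : RleAll (prodFrame Fs) k x y) (j : Fin N) :
    RleAll (Fs j) k (x j) (y j) := by
  induction k generalizing x with
  | zero => cases h; rfl
  | succ k ih =>
    rcases h with h | ⟨i, z, hxz, hzy⟩
    · exact Or.inl (ih h)
    · by_cases hij : i = j
      · subst hij; exact Or.inr ⟨0, z i, hxz.1, ih hzy⟩
      · rw [hxz.2 j (Ne.symm hij)]; exact Or.inl (ih hzy)

theorem rleAll_update {b : (Fs j).W} (h : RleAll (Fs j) k (x j) b) :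
    RleAll (prodFrame Fs) k x (Function.update x j b) := by
  induction k generalizing x with
  | zero => cases h; exact (Function.update_eq_self j _).symm
  | succ k ih =>
    rcases h with h | ⟨i, c, hc, hcb⟩
    · exact Or.inl (ih h)
    · obtain rfl : i = 0 := Subsingleton.elim i 0
      refine Or.inr ⟨j, _, prodFrame_R_update_self hc, ?_⟩
      simpa using ih (x := Function.update x j c) (by simpa using hcb)

end Product

theorem RleAll.rleTail_update {n k : ℕ} {Fs : Fin (n+1) → Frame 1} {x y : ∀ i, (Fs i).W}
    (h : RleAll (prodFrame Fs) k x y) :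
    RleTail (prodFrame Fs) k (Function.update x 0 (y 0)) y := by
  induction k generalizing x with
  | zero => cases h; exact Function.update_eq_self 0 _
  | succ k ih =>
    rcases h with h | ⟨i, z, hxz, hzy⟩
    · exact Or.inl (ih h)
    · cases i using Fin.cases with
      | zero => rw [update_eq_update_of_prodFrame_R hxz]; exact Or.inl (ih hzy)
      | succ i =>
        exact Or.inr ⟨i, _, prodFrame_R_update_of_ne hxz (Fin.succ_ne_zero i) _, ih hzy⟩

theorem of_rleAll_of_head_eq {n d : ℕ} {Fs : Fin (n+1) → Frame 1}
    (P : (∀ i, (Fs i).W) → Prop) {u x z : ∀ i, (Fs i).W}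
    (hdown : ∀ y, RleAll (prodFrame Fs) d u y → P y →
      ∀ y', RleTail (prodFrame Fs) d y y' → P y')
    (hup : ∀ y, RleAll (prodFrame Fs) d u y →
      ∀ y', RleTail (prodFrame Fs) d y y' → P y' → P y)
    (hx : RleAll (prodFrame Fs) d u x) (hz : RleAll (prodFrame Fs) d u z) (h0 : x 0 = z 0)
    (hPz : P z) : P x := by
  -- pass through the point with the first coordinate of `x` and the others of `u`
  have hw : RleAll (prodFrame Fs) d u (Function.update u 0 (x 0)) :=
    rleAll_update (hx.apply 0)
  have hwz : RleTail (prodFrame Fs) d (Function.update u 0 (x 0)) z := h0 ▸ hz.rleTail_update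
  exact hdown _ hw (hup _ hw z hwz hPz) x hx.rleTail_update

section Restriction

variable {n : ℕ} {Fs : Fin (n+1) → Frame 1} {m d : ℕ} {v : ℕ → Set (prodFrame Fs).W}
  {u : (prodFrame Fs).W} {hS : (restrSet Fs m d v u).Nonempty}

theorem restrEmb_mkRestrPt (x : (prodFrame Fs).W) (hx : x 0 ∈ restrSet Fs m d v u) :
    restrEmb Fs m d v u hS (mkRestrPt Fs m d v u hS x hx) = x := by
  funext i
  cases i using Fin.cases <;> rfl

theorem restrEmb_apply_eq_iff (x' y' : (restrFrame Fs m d v u hS).W) (i : Fin (n+1)) :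
    restrEmb Fs m d v u hS x' i = restrEmb Fs m d v u hS y' i ↔ x' i = y' i := by
  cases i using Fin.cases with
  | zero => exact Subtype.ext_iff.symm
  | succ i => rfl

theorem restrFrame_R_iff (i : Fin (n+1)) (x' y' : (restrFrame Fs m d v u hS).W) :
    (restrFrame Fs m d v u hS).R i x' y' ↔
      (prodFrame Fs).R i (restrEmb Fs m d v u hS x') (restrEmb Fs m d v u hS y') := by
  refine and_congr ?_ (forall₂_congr fun j _ => (restrEmb_apply_eq_iff x' y' j).symm)
  cases i using Fin.cases <;> rfl

theorem sat_Bf_restrEmb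
    (hA2 : Sat (prodFrame Fs) v u (boxLe d (.imp (Bf m) (boxLeTail d (Bf m)))))
    (hA3 : Sat (prodFrame Fs) v u (boxLe d (.imp (diaLeTail d (Bf m)) (Bf m))))
    {y' : (restrFrame Fs m d v u hS).W}
    (hy : RleAll (prodFrame Fs) d u (restrEmb Fs m d v u hS y')) :
    Sat (prodFrame Fs) v (restrEmb Fs m d v u hS y') (Bf m) := by
  obtain ⟨z, hz0, hzB, hz⟩ := (y' 0).2
  refine of_rleAll_of_head_eq (Sat (prodFrame Fs) v · (Bf m)) (fun y hy hB => ?_)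
    (fun y hy y' hy' hB => ?_) hy hz hz0.symm hzB
  · exact sat_boxLeTail.1 (sat_boxLe.1 hA2 y hy hB)
  · exact sat_boxLe.1 hA3 y hy (sat_diaLeTail.2 ⟨y', hy', hB⟩)

theorem sat_restrFrame_iff_sat_sigmaT (v' : ℕ → Set (restrFrame Fs m d v u hS).W)
    (hv' : ∀ k, 1 ≤ k → k ≤ m →
      v' k = {y | Sat (prodFrame Fs) v (restrEmb Fs m d v u hS y) (betaF k)})
    (hB : ∀ y' : (restrFrame Fs m d v u hS).W,
      RleAll (prodFrame Fs) d u (restrEmb Fs m d v u hS y') →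
        Sat (prodFrame Fs) v (restrEmb Fs m d v u hS y') (Bf m))
    (ψ : MF (n+1)) (hψ : ∀ q ∈ ψ.vars, 1 ≤ q ∧ q ≤ m) {k : ℕ} (hk : ψ.md + k ≤ d)
    {x' : (restrFrame Fs m d v u hS).W}
    (hx' : RleAll (prodFrame Fs) k u (restrEmb Fs m d v u hS x')) :
    Sat (restrFrame Fs m d v u hS) v' x' ψ ↔
      Sat (prodFrame Fs) v (restrEmb Fs m d v u hS x') (sigmaT m ψ) := by
  induction ψ generalizing k x' with
  | var q =>
    obtain ⟨hq1, hqm⟩ := hψ q rfl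
    exact Set.ext_iff.1 (hv' q hq1 hqm) x'
  | bot => rfl
  | and φ ψ ihφ ihψ =>
    simp only [MF.vars, Set.mem_union, MF.md] at hψ hk
    exact and_congr (ihφ (fun q h => hψ q (.inl h)) (by omega) hx')
      (ihψ (fun q h => hψ q (.inr h)) (by omega) hx')
  | or φ ψ ihφ ihψ =>
    simp only [MF.vars, Set.mem_union, MF.md] at hψ hk
    exact or_congr (ihφ (fun q h => hψ q (.inl h)) (by omega) hx')
      (ihψ (fun q h => hψ q (.inr h)) (by omega) hx')
  | imp φ ψ ihφ ihψ =>
    simp only [MF.vars, Set.mem_union, MF.md] at hψ hk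
    exact imp_congr (ihφ (fun q h => hψ q (.inl h)) (by omega) hx')
      (ihψ (fun q h => hψ q (.inr h)) (by omega) hx')
  | box i φ ih =>
    simp only [MF.vars, MF.md] at hψ hk
    have ih' (y') (hy : (prodFrame Fs).R i (restrEmb Fs m d v u hS x')
        (restrEmb Fs m d v u hS y')) := ih hψ (k := k + 1) (by omega) (hx'.snoc hy)
    constructor
    · intro h y hy hyB
      -- `y` is a reachable `B`-point, so it witnesses its own first coordinate in `W′₁`
      have hy0 : y 0 ∈ restrSet Fs m d v u := ⟨y, rfl, hyB, (hx'.snoc hy).mono (by omega)⟩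
      obtain ⟨y', rfl⟩ : ∃ y', restrEmb Fs m d v u hS y' = y := ⟨_, restrEmb_mkRestrPt y hy0⟩
      exact (ih' y' hy).1 (h y' ((restrFrame_R_iff i x' y').2 hy))
    · intro h y' hy'
      have hy := (restrFrame_R_iff i x' y').1 hy'
      exact (ih' y' hy).2 (h _ hy (hB y' ((hx'.snoc hy).mono (by omega))))

end Restriction

end ModalProducts

open ModalProducts

/-- In the construction for direction (⇒) of Lemma 3.1: if moreover `𝔉, ū ⊭ᵛ σ(φ)`, then
`u₁ ∈ W′₁` (so `ū ∈ W̄′`), the frame `𝔉′₁` is reflexive, `𝔉′, ū ⊭^{v′} φ`, and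
consequently `φ` is refuted in a product of a reflexive 1-frame with `𝔉₂, …, 𝔉ₙ`. -/
theorem refutation_in_restricted_frame (n m : ℕ) (φ : MF (n+1))
    (hvars : ∀ q ∈ φ.vars, 1 ≤ q ∧ q ≤ m)
    (Fs : Fin (n+1) → Frame 1) (hrefl : ReflexiveFrame (Fs 0))
    (v : ℕ → Set (prodFrame Fs).W)
    (u : (prodFrame Fs).W) (hA : Sat (prodFrame Fs) v u (Af m φ))
    (hσ : ¬ Sat (prodFrame Fs) v u (sigmaT m φ))
    (hS : (restrSet Fs m φ.md v u).Nonempty)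
    (v' : ℕ → Set (restrFrame Fs m φ.md v u hS).W)
    (hv' : ∀ k, 1 ≤ k → k ≤ m →
      v' k = {y | Sat (prodFrame Fs) v (restrEmb Fs m φ.md v u hS y) (betaF k)}) :
    u 0 ∈ restrSet Fs m φ.md v u ∧
    ReflexiveFrame (subFrame1 (Fs 0) (restrSet Fs m φ.md v u) hS) ∧
    (∀ hu : u 0 ∈ restrSet Fs m φ.md v u,
      ¬ Sat (restrFrame Fs m φ.md v u hS) v' (mkRestrPt Fs m φ.md v u hS u hu) φ) ∧
    (∃ G : Frame 1, ReflexiveFrame G ∧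
      ∃ (vv : ℕ → Set (prodFrame (Fin.cases (motive := fun _ => Frame 1) G
              (fun i => Fs i.succ))).W)
        (w : (prodFrame (Fin.cases (motive := fun _ => Frame 1) G
              (fun i => Fs i.succ))).W),
        ¬ Sat (prodFrame (Fin.cases (motive := fun _ => Frame 1) G (fun i => Fs i.succ)))
            vv w φ) := by
  obtain ⟨hBu, hA2, hA3⟩ := hA
  have hu : u 0 ∈ restrSet Fs m φ.md v u := ⟨u, rfl, hBu, rleAll_refl _ _ u⟩
  have hrefl' : ReflexiveFrame (subFrame1 (Fs 0) (restrSet Fs m φ.md v u) hS) :=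
    fun x => hrefl x.val
  have hrefute : ∀ hu : u 0 ∈ restrSet Fs m φ.md v u,
      ¬ Sat (restrFrame Fs m φ.md v u hS) v' (mkRestrPt Fs m φ.md v u hS u hu) φ := by
    intro hu hsat
    have htruth := sat_restrFrame_iff_sat_sigmaT v' hv' (fun _ => sat_Bf_restrEmb hA2 hA3) φ hvars
      (k := 0) le_rfl (restrEmb_mkRestrPt u hu).symm
    rw [restrEmb_mkRestrPt] at htruth
    exact hσ (htruth.1 hsat)
  exact ⟨hu, hrefl', hrefute, _, hrefl', v', _, hrefute hu⟩
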